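/- Let ℓ be a nonnegative integer. Define 𝔊(x,y,z) = Q_{4ℓ+1}(x,y)·sin z + Q_{4ℓ+1}(x,z)·sin y + Q_{4ℓ+1}(z,x)·cos y − Q_{4ℓ+1}(y,x)·cos z, and let V be the vector field on ℝ³ given by V(x,y,z) = (𝔊(x,y,z), 𝔊(y,z,x), 𝔊(z,x,y)). Then V has tetrahedral symmetry: for ε equal to either of the matrices α = [[1,0,0],[0,−1,0],[0,0,−1]] or γ = [[0,1,0],[0,0,1],[1,0,0]], one has ε⁻¹ ∘ V ∘ ε = V (hence this holds for every ε in the tetrahedral group 𝕋 = ⟨α,γ⟩ of order 12). -/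
import Mathlib


noncomputable section

open Real

/-- The standard harmonic polynomial `P_n(x,y) = Re((x+iy)^n)`. -/
def polyP (n : ℕ) (x y : ℝ) : ℝ := ((x + y * Complex.I) ^ n).re

/-- The standard harmonic polynomial `Q_n(x,y) = Im((x+iy)^n)`. -/
def polyQ (n : ℕ) (x y : ℝ) : ℝ := ((x + y * Complex.I) ^ n).im

/-- Partial derivative in the `i`-th coordinate direction. -/
def pd (i : Fin 3) (F : (Fin 3 → ℝ) → ℝ) : (Fin 3 → ℝ) → ℝ :=
  fun v => deriv (fun t => F (Function.update v i t)) (v i)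

/-- Divergence of a vector field on ℝ³. -/
def div3 (V : (Fin 3 → ℝ) → (Fin 3 → ℝ)) : (Fin 3 → ℝ) → ℝ :=
  fun v => pd 0 (fun w => V w 0) v + pd 1 (fun w => V w 1) v + pd 2 (fun w => V w 2) v

/-- Curl of a vector field on ℝ³. -/
def curl3 (V : (Fin 3 → ℝ) → (Fin 3 → ℝ)) : (Fin 3 → ℝ) → (Fin 3 → ℝ) :=
  fun v => ![pd 1 (fun w => V w 2) v - pd 2 (fun w => V w 1) v,
             pd 2 (fun w => V w 0) v - pd 0 (fun w => V w 2) v,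
             pd 0 (fun w => V w 1) v - pd 1 (fun w => V w 0) v]

/-- Laplacian of a scalar function on ℝ³. -/
def lap3 (F : (Fin 3 → ℝ) → ℝ) : (Fin 3 → ℝ) → ℝ :=
  fun v => pd 0 (pd 0 F) v + pd 1 (pd 1 F) v + pd 2 (pd 2 F) v


lemma polyQ_neg_neg (n : ℕ) (hn : Odd n) (x y : ℝ) :
    polyQ n (-x) (-y) = -polyQ n x y := by
  unfold polyQ
  rw [show ((-x : ℝ) : ℂ) + (-y : ℝ) * Complex.I = -((x : ℂ) + y * Complex.I) by
    push_cast; ring, hn.neg_pow]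
  simp

lemma polyQ_neg_left (n : ℕ) (hn : Odd n) (x y : ℝ) :
    polyQ n (-x) y = polyQ n x y := by
  unfold polyQ
  rw [show ((-x : ℝ) : ℂ) + (y : ℝ) * Complex.I
      = -((starRingEnd ℂ) ((x : ℂ) + y * Complex.I)) by
    simp [Complex.ext_iff], hn.neg_pow, ← map_pow, Complex.neg_im, Complex.conj_im,
    neg_neg]

lemma polyQ_neg_right (n : ℕ) (hn : Odd n) (x y : ℝ) :
    polyQ n x (-y) = -polyQ n x y := by
  have := polyQ_neg_left n hn (-x) (-y)
  rw [neg_neg] at this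
  rw [this, polyQ_neg_neg n hn]

def Gd (l : ℕ) (x y z : ℝ) : ℝ :=
  polyQ (4 * l + 1) x y * Real.sin z + polyQ (4 * l + 1) x z * Real.sin y
    + polyQ (4 * l + 1) z x * Real.cos y - polyQ (4 * l + 1) y x * Real.cos z

lemma hodd (l : ℕ) : Odd (4 * l + 1) := ⟨2 * l, by ring⟩

lemma GA (l : ℕ) (x y z : ℝ) : Gd l x (-y) (-z) = Gd l x y z := by
  unfold Gd
  simp [polyQ_neg_neg _ (hodd l), polyQ_neg_left _ (hodd l), polyQ_neg_right _ (hodd l),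
    Real.sin_neg, Real.cos_neg]
  try ring

lemma GB (l : ℕ) (x y z : ℝ) : Gd l (-x) (-y) z = -Gd l x y z := by
  unfold Gd
  simp [polyQ_neg_neg _ (hodd l), polyQ_neg_left _ (hodd l), polyQ_neg_right _ (hodd l),
    Real.sin_neg, Real.cos_neg]
  ring

lemma GC (l : ℕ) (x y z : ℝ) : Gd l (-x) y (-z) = -Gd l x y z := by
  unfold Gd
  simp [polyQ_neg_neg _ (hodd l), polyQ_neg_left _ (hodd l), polyQ_neg_right _ (hodd l),
    Real.sin_neg, Real.cos_neg]
  ring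


open Matrix in
/-- the tetrahedral field of order `4ℓ+1` is invariant under conjugation by
the generators `α`, `γ` of the tetrahedral group `𝕋`. -/
theorem tetrahedral_symmetry_first (l : ℕ) :
    let G : ℝ → ℝ → ℝ → ℝ := fun x y z =>
      polyQ (4 * l + 1) x y * Real.sin z + polyQ (4 * l + 1) x z * Real.sin y
        + polyQ (4 * l + 1) z x * Real.cos y - polyQ (4 * l + 1) y x * Real.cos z
    let V : (Fin 3 → ℝ) → (Fin 3 → ℝ) := fun v =>
      ![G (v 0) (v 1) (v 2), G (v 1) (v 2) (v 0), G (v 2) (v 0) (v 1)]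
    let α : Matrix (Fin 3) (Fin 3) ℝ := !![1, 0, 0; 0, -1, 0; 0, 0, -1]
    let γ : Matrix (Fin 3) (Fin 3) ℝ := !![0, 1, 0; 0, 0, 1; 1, 0, 0]
    (∀ v, α⁻¹.mulVec (V (α.mulVec v)) = V v) ∧
    (∀ v, γ⁻¹.mulVec (V (γ.mulVec v)) = V v) := by
  intro G V α γ
  have hG : G = Gd l := rfl
  have hαinv : α⁻¹ = α := by
    apply Matrix.inv_eq_right_inv
    show (!![1,0,0;0,-1,0;0,0,-1] : Matrix (Fin 3) (Fin 3) ℝ) * !![1,0,0;0,-1,0;0,0,-1] = 1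
    rw [Matrix.one_fin_three]; norm_num [Matrix.mul_fin_three]
  have hγinv : γ⁻¹ = !![0,0,1;1,0,0;0,1,0] := by
    apply Matrix.inv_eq_right_inv
    show (!![0,1,0;0,0,1;1,0,0] : Matrix (Fin 3) (Fin 3) ℝ) * !![0,0,1;1,0,0;0,1,0] = 1
    rw [Matrix.one_fin_three]; norm_num [Matrix.mul_fin_three]
  have hαv : ∀ w : Fin 3 → ℝ, α.mulVec w = ![w 0, -w 1, -w 2] := by
    intro w; funext j
    fin_cases j <;>
      simp [show α = !![1,0,0;0,-1,0;0,0,-1] from rfl, Matrix.mulVec, dotProduct,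
        Fin.sum_univ_three]
  have hγv : ∀ w : Fin 3 → ℝ, γ.mulVec w = ![w 1, w 2, w 0] := by
    intro w; funext j
    fin_cases j <;>
      simp [show γ = !![0,1,0;0,0,1;1,0,0] from rfl, Matrix.mulVec, dotProduct,
        Fin.sum_univ_three]
  have hδv : ∀ w : Fin 3 → ℝ, (!![0,0,1;1,0,0;0,1,0] : Matrix (Fin 3) (Fin 3) ℝ).mulVec w
      = ![w 2, w 0, w 1] := by
    intro w; funext j
    fin_cases j <;>
      simp [Matrix.mulVec, dotProduct, Fin.sum_univ_three]
  constructor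
  · intro v
    rw [hαinv, hαv, hαv]
    funext i
    fin_cases i <;> simp [V, hG, GA, GB, GC, neg_neg]
  · intro v
    rw [hγinv, hγv, hδv]
    funext i
    fin_cases i <;> simp [V]
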